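/- arXiv:math/0509639 — 6 statements merged into one kernel-verified Lean document; each statement's English description precedes it below -/
import Mathlib

section
/- Let A, B, C : [0, ∞) → ℝ be differentiable functions, positive for all t ≥ 0, satisfying the Sol Ricci-flow system A'(t) = (C(t)² − A(t)²)/(B(t)C(t)), B'(t) = (A(t) + C(t))²/(A(t)C(t)), C'(t) = (A(t)² − C(t)²)/(A(t)B(t)) for all t ≥ 0. Then the product A(t)·C(t) is constant: A(t)C(t) = A(0)C(0) for all t ≥ 0. -/
open Set

/-- **Sol Ricci flow: conservation of A·C.**
If `A, B, C : [0,∞) → ℝ` are differentiable, positive functions satisfying the Sol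
Ricci-flow system `A' = (C² − A²)/(BC)`, `B' = (A+C)²/(AC)`, `C' = (A² − C²)/(AB)`,
then `A(t)·C(t) = A(0)·C(0)` for all `t ≥ 0`. -/
theorem sol_ricci_flow_AC_const
    (A B C : ℝ → ℝ)
    (hApos : ∀ t ≥ (0:ℝ), 0 < A t)
    (hBpos : ∀ t ≥ (0:ℝ), 0 < B t)
    (hCpos : ∀ t ≥ (0:ℝ), 0 < C t)
    (hA : ∀ t ≥ (0:ℝ),
      HasDerivWithinAt A ((C t ^ 2 - A t ^ 2) / (B t * C t)) (Ici 0) t)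
    (hB : ∀ t ≥ (0:ℝ),
      HasDerivWithinAt B ((A t + C t) ^ 2 / (A t * C t)) (Ici 0) t)
    (hC : ∀ t ≥ (0:ℝ),
      HasDerivWithinAt C ((A t ^ 2 - C t ^ 2) / (A t * B t)) (Ici 0) t) :
    ∀ t ≥ (0:ℝ), A t * C t = A 0 * C 0 := by
  have key : ∀ x ≥ (0:ℝ), HasDerivWithinAt (fun t => A t * C t) 0 (Ici x) x := by
    intro x hx
    have h := ((hA x hx).mul (hC x hx)).mono (Ici_subset_Ici.2 hx)
    have hA0 := (hApos x hx).ne'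
    have hB0 := (hBpos x hx).ne'
    have hC0 := (hCpos x hx).ne'
    refine h.congr_deriv ?_
    field_simp
    ring
  intro t ht
  have hcont : ContinuousOn (fun t => A t * C t) (Icc 0 t) := by
    intro x hx
    exact (((hA x hx.1).mul (hC x hx.1)).continuousWithinAt).mono (fun y hy => hy.1)
  exact constant_of_has_deriv_right_zero hcont
    (fun x hx => key x hx.1) t ⟨ht, le_rfl⟩
end

section
/- Let A, B, C : [0, ∞) → ℝ be differentiable functions, positive for all t ≥ 0, satisfying A'(t) = (C(t)² − A(t)²)/(B(t)C(t)), B'(t) = (A(t) + C(t))²/(A(t)C(t)), C'(t) = (A(t)² − C(t)²)/(A(t)B(t)) for all t ≥ 0. Then lim_{t→∞} A(t) = √(A(0)C(0)), lim_{t→∞} C(t) = √(A(0)C(0)), and lim_{t→∞} B(t)/t = 4. -/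
open Set Filter

private lemma mono_of_right {f f' : ℝ → ℝ}
    (hf : ∀ t ≥ (0:ℝ), HasDerivWithinAt f (f' t) (Ici 0) t)
    (h0 : ∀ t ≥ (0:ℝ), 0 ≤ f' t) : MonotoneOn f (Ici 0) := by
  apply monotoneOn_of_deriv_nonneg (convex_Ici 0)
    (fun t ht => (hf t ht).continuousWithinAt)
  · intro x hx
    rw [interior_Ici] at hx
    exact ((hf x hx.le).hasDerivAt (Ici_mem_nhds hx)).differentiableAt.differentiableWithinAt
  · intro x hx
    rw [interior_Ici] at hx
    rw [((hf x hx.le).hasDerivAt (Ici_mem_nhds hx)).deriv]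
    exact h0 x hx.le

private lemma const_of_right {f f' : ℝ → ℝ}
    (hf : ∀ t ≥ (0:ℝ), HasDerivWithinAt f (f' t) (Ici 0) t)
    (h0 : ∀ t ≥ (0:ℝ), f' t = 0) : ∀ t ≥ (0:ℝ), f t = f 0 := by
  intro t ht
  refine constant_of_has_deriv_right_zero (a := 0) (b := t)
    (fun x hx => ((hf x hx.1).continuousWithinAt).mono (fun y hy => hy.1))
    (fun x hx => ((h0 x hx.1) ▸ hf x hx.1).mono (Ici_subset_Ici.2 hx.1))
    t ⟨ht, le_refl t⟩

/-- **Sol Ricci flow: long-time asymptotics.**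
If `A, B, C : [0,∞) → ℝ` are differentiable, positive functions satisfying the Sol
Ricci-flow system `A' = (C² − A²)/(BC)`, `B' = (A+C)²/(AC)`, `C' = (A² − C²)/(AB)`,
then `A(t) → √(A(0)C(0))`, `C(t) → √(A(0)C(0))` and `B(t)/t → 4` as `t → ∞`. -/
theorem sol_ricci_flow_asymptotics
    (A B C : ℝ → ℝ)
    (hApos : ∀ t ≥ (0:ℝ), 0 < A t)
    (hBpos : ∀ t ≥ (0:ℝ), 0 < B t)
    (hCpos : ∀ t ≥ (0:ℝ), 0 < C t)
    (hA : ∀ t ≥ (0:ℝ),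
      HasDerivWithinAt A ((C t ^ 2 - A t ^ 2) / (B t * C t)) (Ici 0) t)
    (hB : ∀ t ≥ (0:ℝ),
      HasDerivWithinAt B ((A t + C t) ^ 2 / (A t * C t)) (Ici 0) t)
    (hC : ∀ t ≥ (0:ℝ),
      HasDerivWithinAt C ((A t ^ 2 - C t ^ 2) / (A t * B t)) (Ici 0) t) :
    Tendsto A atTop (nhds (Real.sqrt (A 0 * C 0))) ∧
    Tendsto C atTop (nhds (Real.sqrt (A 0 * C 0))) ∧
    Tendsto (fun t => B t / t) atTop (nhds 4) := by
  have hA0 := hApos 0 le_rfl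
  have hB0 := hBpos 0 le_rfl
  have hC0 := hCpos 0 le_rfl
  set k : ℝ := A 0 * C 0 with hkdef
  set c : ℝ := (A 0 - C 0) * B 0 with hcdef
  have hk : 0 < k := mul_pos hA0 hC0
  -- A*C is constant (= k)
  have hP : ∀ t ≥ (0:ℝ), HasDerivWithinAt (fun s => A s * C s) 0 (Ici 0) t := by
    intro t ht
    have h := (hA t ht).mul (hC t ht)
    have hA0 := (hApos t ht).ne'
    have hB0 := (hBpos t ht).ne'
    have hC0 := (hCpos t ht).ne'
    have : (C t ^ 2 - A t ^ 2) / (B t * C t) * C t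
        + A t * ((A t ^ 2 - C t ^ 2) / (A t * B t)) = 0 := by
      field_simp; ring
    rwa [this] at h
  have hAC : ∀ t ≥ (0:ℝ), A t * C t = k :=
    const_of_right hP (fun t _ => rfl)
  -- (A - C)*B is constant (= c)
  have hE : ∀ t ≥ (0:ℝ), HasDerivWithinAt (fun s => (A s - C s) * B s) 0 (Ici 0) t := by
    intro t ht
    have h := ((hA t ht).sub (hC t ht)).mul (hB t ht)
    have hA0 := (hApos t ht).ne'
    have hB0 := (hBpos t ht).ne'
    have hC0 := (hCpos t ht).ne'
    have : ((C t ^ 2 - A t ^ 2) / (B t * C t) - (A t ^ 2 - C t ^ 2) / (A t * B t)) * B t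
        + (A t - C t) * ((A t + C t) ^ 2 / (A t * C t)) = 0 := by
      field_simp; ring
    simp only [Pi.sub_apply] at h
    rwa [this] at h
  have hACB : ∀ t ≥ (0:ℝ), (A t - C t) * B t = c :=
    const_of_right hE (fun t _ => rfl)
  clear_value k c
  have hD : ∀ t ≥ (0:ℝ), A t - C t = c / B t := by
    intro t ht
    rw [eq_div_iff (hBpos t ht).ne']
    exact hACB t ht
  -- (A+C)^2 = (c/B)^2 + 4k
  have hSsq : ∀ t ≥ (0:ℝ), (A t + C t) ^ 2 = (c / B t) ^ 2 + 4 * k := by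
    intro t ht
    have h0 : (A t + C t) ^ 2 = (A t - C t) ^ 2 + 4 * (A t * C t) := by ring
    rw [h0, hD t ht, hAC t ht]
  -- lower bound: B t ≥ B 0 + 4 t
  have hBlow : ∀ t ≥ (0:ℝ), B 0 + 4 * t ≤ B t := by
    have hm : MonotoneOn (fun s => B s - 4 * s) (Ici 0) := by
      apply mono_of_right (f' := fun t => (A t + C t) ^ 2 / (A t * C t) - 4)
      · intro t ht
        have h4 : HasDerivWithinAt (fun s : ℝ => 4 * s) 4 (Ici 0) t := by
          simpa using (((hasDerivAt_id t).const_mul (4:ℝ)).hasDerivWithinAt (s := Ici 0))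
        exact (hB t ht).sub h4
      · intro t ht
        have hACpos : 0 < A t * C t := mul_pos (hApos t ht) (hCpos t ht)
        rw [sub_nonneg, le_div_iff₀ hACpos]
        nlinarith [sq_nonneg (A t - C t)]
    intro t ht
    have h : B 0 - 4 * 0 ≤ B t - 4 * t := hm self_mem_Ici (mem_Ici.2 ht) ht
    linarith
  -- upper bound: B t ≤ 4 t + K where K = B 0 + c^2/(4 k * B 0)
  set K : ℝ := B 0 + c ^ 2 / (4 * k) * (B 0)⁻¹ with hKdef
  have hBup : ∀ t ≥ (0:ℝ), B t ≤ 4 * t + K := by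
    set G : ℝ → ℝ := fun s => 4 * s + B 0 + c ^ 2 / (4 * k) * ((B 0)⁻¹ - (B 0 + 4 * s)⁻¹)
      with hGdef
    have hm : MonotoneOn (fun s => G s - B s) (Ici 0) := by
      apply mono_of_right
        (f' := fun t => (4 + c ^ 2 / (4 * k) * (4 / (B 0 + 4 * t) ^ 2))
          - (A t + C t) ^ 2 / (A t * C t))
      · intro t ht
        have hne : B 0 + 4 * t ≠ 0 := by positivity
        have hu : HasDerivAt (fun s : ℝ => B 0 + 4 * s) 4 t := by
          simpa using ((hasDerivAt_id t).const_mul (4:ℝ)).const_add (B 0)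
        have hinv : HasDerivAt (fun s : ℝ => (B 0 + 4 * s)⁻¹)
            (-4 / (B 0 + 4 * t) ^ 2) t := hu.inv hne
        have hG' : HasDerivAt G (4 + c ^ 2 / (4 * k) * (4 / (B 0 + 4 * t) ^ 2)) t := by
          have h1 : HasDerivAt (fun s : ℝ => 4 * s + B 0) 4 t := by
            simpa using ((hasDerivAt_id t).const_mul (4:ℝ)).add_const (B 0)
          have h2 : HasDerivAt (fun s : ℝ => c ^ 2 / (4 * k) * ((B 0)⁻¹ - (B 0 + 4 * s)⁻¹))
              (c ^ 2 / (4 * k) * (4 / (B 0 + 4 * t) ^ 2)) t := by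
            have := (hinv.const_sub ((B 0)⁻¹)).const_mul (c ^ 2 / (4 * k))
            refine this.congr_deriv ?_
            ring
          exact h1.add h2
        exact (hG'.hasDerivWithinAt).sub (hB t ht)
      · intro t ht
        rw [sub_nonneg]
        have hACk := hAC t ht
        have h1 : (A t + C t) ^ 2 / (A t * C t) = c ^ 2 / (k * B t ^ 2) + 4 := by
          rw [hSsq t ht, hACk]
          have hBne := (hBpos t ht).ne'
          field_simp
        rw [h1]
        have hBt := hBpos t ht
        have hBl := hBlow t ht
        have hB0t : 0 < B 0 + 4 * t := by positivity
        have h2 : c ^ 2 / (k * B t ^ 2) ≤ c ^ 2 / (k * (B 0 + 4 * t) ^ 2) := by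
          gcongr
        have h3 : c ^ 2 / (k * (B 0 + 4 * t) ^ 2)
            = c ^ 2 / (4 * k) * (4 / (B 0 + 4 * t) ^ 2) := by
          field_simp
        linarith [h2, h3]
    intro t ht
    have h : G 0 - B 0 ≤ G t - B t := hm self_mem_Ici (mem_Ici.2 ht) ht
    have hG0 : G 0 - B 0 = 0 := by simp [hGdef]
    have hGle : G t ≤ 4 * t + K := by
      have hb : 0 ≤ (B 0 + 4 * t)⁻¹ := by positivity
      have hc2 : 0 ≤ c ^ 2 / (4 * k) := by positivity
      have : c ^ 2 / (4 * k) * ((B 0)⁻¹ - (B 0 + 4 * t)⁻¹)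
          ≤ c ^ 2 / (4 * k) * (B 0)⁻¹ := by
        apply mul_le_mul_of_nonneg_left _ hc2
        linarith
      simp only [hGdef, hKdef]
      linarith
    rw [hG0] at h
    linarith [h, hGle]
  -- B tends to infinity
  have hBtop : Tendsto B atTop atTop := by
    apply tendsto_atTop_mono' atTop
      (eventually_atTop.2 ⟨0, fun t ht => hBlow t ht⟩)
    exact tendsto_atTop_add_const_left _ _
      (tendsto_id.const_mul_atTop (by norm_num : (0:ℝ) < 4))
  -- c / B → 0
  have hDlim : Tendsto (fun t => c / B t) atTop (nhds 0) :=
    Tendsto.div_atTop tendsto_const_nhds hBtop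
  -- A + C → 2 √k
  have hsqrt4k : Real.sqrt ((0:ℝ) ^ 2 + 4 * k) = 2 * Real.sqrt k := by
    rw [show (0:ℝ) ^ 2 + 4 * k = 2 ^ 2 * k by ring,
      Real.sqrt_mul (by norm_num : (0:ℝ) ≤ 2 ^ 2),
      Real.sqrt_sq (by norm_num : (0:ℝ) ≤ 2)]
  have hSlim : Tendsto (fun t => Real.sqrt ((c / B t) ^ 2 + 4 * k)) atTop
      (nhds (2 * Real.sqrt k)) := by
    have h1 : Tendsto (fun t => (c / B t) ^ 2 + 4 * k) atTop (nhds ((0:ℝ) ^ 2 + 4 * k)) :=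
      (hDlim.pow 2).add_const _
    have := (Real.continuous_sqrt.continuousAt).tendsto.comp h1
    rwa [hsqrt4k] at this
  have hSeq : ∀ t ≥ (0:ℝ), A t + C t = Real.sqrt ((c / B t) ^ 2 + 4 * k) := by
    intro t ht
    have hpos : 0 ≤ A t + C t := by linarith [(hApos t ht), (hCpos t ht)]
    rw [← hSsq t ht, Real.sqrt_sq hpos]
  -- A → √k
  have hAlim : Tendsto A atTop (nhds (Real.sqrt k)) := by
    have h1 : Tendsto (fun t => (Real.sqrt ((c / B t) ^ 2 + 4 * k) + c / B t) / 2) atTop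
        (nhds ((2 * Real.sqrt k + 0) / 2)) := (hSlim.add hDlim).div_const 2
    have h2 : (2 * Real.sqrt k + 0) / 2 = Real.sqrt k := by ring
    rw [h2] at h1
    apply h1.congr'
    filter_upwards [eventually_ge_atTop (0:ℝ)] with t ht
    have := hSeq t ht
    have := hD t ht
    linarith
  have hClim : Tendsto C atTop (nhds (Real.sqrt k)) := by
    have h1 : Tendsto (fun t => (Real.sqrt ((c / B t) ^ 2 + 4 * k) - c / B t) / 2) atTop
        (nhds ((2 * Real.sqrt k - 0) / 2)) := (hSlim.sub hDlim).div_const 2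
    have h2 : (2 * Real.sqrt k - 0) / 2 = Real.sqrt k := by ring
    rw [h2] at h1
    apply h1.congr'
    filter_upwards [eventually_ge_atTop (0:ℝ)] with t ht
    have := hSeq t ht
    have := hD t ht
    linarith
  refine ⟨hAlim, hClim, ?_⟩
  -- B t / t → 4 by squeezing
  have hlow : Tendsto (fun t : ℝ => (B 0 + 4 * t) / t) atTop (nhds 4) := by
    have h1 : Tendsto (fun t : ℝ => B 0 / t + 4) atTop (nhds (0 + 4)) :=
      (Tendsto.div_atTop tendsto_const_nhds tendsto_id).add_const 4
    rw [zero_add] at h1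
    apply h1.congr'
    filter_upwards [eventually_gt_atTop (0:ℝ)] with t ht
    field_simp
  have hup : Tendsto (fun t : ℝ => (4 * t + K) / t) atTop (nhds 4) := by
    have h1 : Tendsto (fun t : ℝ => 4 + K / t) atTop (nhds (4 + 0)) :=
      tendsto_const_nhds.add (Tendsto.div_atTop tendsto_const_nhds tendsto_id)
    rw [add_zero] at h1
    apply h1.congr'
    filter_upwards [eventually_gt_atTop (0:ℝ)] with t ht
    field_simp
  apply tendsto_of_tendsto_of_tendsto_of_le_of_le' hlow hup
  · filter_upwards [eventually_gt_atTop (0:ℝ)] with t ht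
    exact div_le_div_of_nonneg_right (hBlow t ht.le) ht.le
  · filter_upwards [eventually_gt_atTop (0:ℝ)] with t ht
    exact div_le_div_of_nonneg_right (hBup t ht.le) ht.le
end

section
/- Let A₀, B₀, C₀ > 0 and let A, B, C : [0, ∞) → ℝ be differentiable functions, positive for all t ≥ 0, with A(0) = A₀, B(0) = B₀, C(0) = C₀, satisfying the Nil Ricci-flow system A'(t) = −A(t)²/(B(t)C(t)), B'(t) = A(t)/C(t), C'(t) = A(t)/B(t) for all t ≥ 0. Then for all t ≥ 0: A(t) = A₀(1 + 3A₀t/(B₀C₀))^{−1/3}, B(t) = B₀(1 + 3A₀t/(B₀C₀))^{1/3}, and C(t) = C₀(1 + 3A₀t/(B₀C₀))^{1/3}. -/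
open Set

private lemma const_of_deriv_zero (f : ℝ → ℝ)
    (hf : ∀ t ≥ (0:ℝ), HasDerivWithinAt f 0 (Ici 0) t) :
    ∀ t ≥ (0:ℝ), f t = f 0 := by
  intro t ht
  exact constant_of_has_deriv_right_zero
    (fun x hx => (hf x hx.1).continuousWithinAt.mono Icc_subset_Ici_self)
    (fun x hx => (hf x hx.1).mono (Ici_subset_Ici.mpr hx.1))
    t ⟨ht, le_rfl⟩

private lemma cube_inj {x y : ℝ} (hx : 0 < x) (hy : 0 < y) (h : x ^ 3 = y ^ 3) : x = y := by
  nlinarith [sq_nonneg (x - y), sq_nonneg (x + y), mul_pos hx hy]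

/-- **Nil Ricci flow: explicit solution.**
If `A, B, C : [0,∞) → ℝ` are differentiable, positive functions with initial values
`A₀, B₀, C₀ > 0` satisfying the Nil Ricci-flow system `A' = −A²/(BC)`, `B' = A/C`,
`C' = A/B`, then `A(t) = A₀(1 + 3A₀t/(B₀C₀))^{−1/3}`, `B(t) = B₀(1 + 3A₀t/(B₀C₀))^{1/3}`
and `C(t) = C₀(1 + 3A₀t/(B₀C₀))^{1/3}` for all `t ≥ 0`. -/
theorem nil_ricci_flow_explicit_solution
    (A₀ B₀ C₀ : ℝ) (hA₀ : 0 < A₀) (hB₀ : 0 < B₀) (hC₀ : 0 < C₀)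
    (A B C : ℝ → ℝ)
    (hApos : ∀ t ≥ (0:ℝ), 0 < A t)
    (hBpos : ∀ t ≥ (0:ℝ), 0 < B t)
    (hCpos : ∀ t ≥ (0:ℝ), 0 < C t)
    (hA0 : A 0 = A₀) (hB0 : B 0 = B₀) (hC0 : C 0 = C₀)
    (hA : ∀ t ≥ (0:ℝ),
      HasDerivWithinAt A (-(A t ^ 2) / (B t * C t)) (Ici 0) t)
    (hB : ∀ t ≥ (0:ℝ),
      HasDerivWithinAt B (A t / C t) (Ici 0) t)
    (hC : ∀ t ≥ (0:ℝ),
      HasDerivWithinAt C (A t / B t) (Ici 0) t) :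
    ∀ t ≥ (0:ℝ),
      A t = A₀ * (1 + 3 * A₀ * t / (B₀ * C₀)) ^ (-(1/3) : ℝ) ∧
      B t = B₀ * (1 + 3 * A₀ * t / (B₀ * C₀)) ^ ((1/3) : ℝ) ∧
      C t = C₀ * (1 + 3 * A₀ * t / (B₀ * C₀)) ^ ((1/3) : ℝ) := by
  -- A·B is conserved
  have h1 : ∀ s ≥ (0:ℝ), A s * B s = A₀ * B₀ := by
    have := const_of_deriv_zero (fun s => A s * B s) (fun s hs => by
      have h := (hA s hs).mul (hB s hs)
      have e : -(A s ^ 2) / (B s * C s) * B s + A s * (A s / C s) = 0 := by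
        have hBne : B s ≠ 0 := (hBpos s hs).ne'
        have hCne : C s ≠ 0 := (hCpos s hs).ne'
        field_simp
        ring
      rwa [e] at h)
    intro s hs
    simpa [hA0, hB0] using this s hs
  -- A·C is conserved
  have h2 : ∀ s ≥ (0:ℝ), A s * C s = A₀ * C₀ := by
    have := const_of_deriv_zero (fun s => A s * C s) (fun s hs => by
      have h := (hA s hs).mul (hC s hs)
      have e : -(A s ^ 2) / (B s * C s) * C s + A s * (A s / B s) = 0 := by
        have hBne : B s ≠ 0 := (hBpos s hs).ne'
        have hCne : C s ≠ 0 := (hCpos s hs).ne'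
        field_simp
        ring
      rwa [e] at h)
    intro s hs
    simpa [hA0, hC0] using this s hs
  set K : ℝ := A₀ ^ 2 * B₀ * C₀ with hK
  have hKpos : 0 < K := by positivity
  -- (A⁻³ - (3/K)·s) is conserved
  have h3 : ∀ s ≥ (0:ℝ), (A s ^ 3)⁻¹ - 3 / K * s = (A₀ ^ 3)⁻¹ := by
    have := const_of_deriv_zero (fun s => (A s ^ 3)⁻¹ - 3 / K * s) (fun s hs => by
      have hAne : A s ≠ 0 := (hApos s hs).ne'
      have hd := (((hA s hs).pow 3).inv (pow_ne_zero 3 hAne)).sub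
        ((hasDerivWithinAt_id s (Ici 0)).const_mul (3 / K))
      have hBs : B s = A₀ * B₀ / A s := by
        field_simp
        linarith [h1 s hs]
      have hCs : C s = A₀ * C₀ / A s := by
        field_simp
        linarith [h2 s hs]
      have e : -(↑(3:ℕ) * A s ^ (3 - 1) * (-(A s ^ 2) / (B s * C s))) / (A s ^ 3) ^ 2
          - 3 / K * 1 = 0 := by
        rw [hBs, hCs, hK]
        field_simp
        ring
      rw [Pi.pow_apply] at hd
      rwa [e] at hd)
    intro s hs
    simpa [hA0] using this s hs
  intro t ht
  set u : ℝ := 1 + 3 * A₀ * t / (B₀ * C₀) with hu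
  have hupos : 0 < u := by
    rw [hu]
    have : 0 ≤ 3 * A₀ * t / (B₀ * C₀) := by positivity
    linarith
  have hAt : 0 < A t := hApos t ht
  -- cube of A t
  have hcube : A t ^ 3 = A₀ ^ 3 / u := by
    have h := h3 t ht
    have hinv : (A t ^ 3)⁻¹ = u / A₀ ^ 3 := by
      have h5 : (A t ^ 3)⁻¹ = (A₀ ^ 3)⁻¹ + 3 / K * t := by linarith
      rw [h5, hu, hK]
      field_simp
    have h4 : A t ^ 3 = (u / A₀ ^ 3)⁻¹ := by
      rw [← hinv, inv_inv]
    rw [h4, inv_div]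
  have hval : (A₀ * u ^ (-(1/3) : ℝ)) ^ 3 = A₀ ^ 3 / u := by
    rw [mul_pow, ← Real.rpow_natCast (u ^ (-(1/3) : ℝ)) 3, ← Real.rpow_mul hupos.le]
    norm_num
    rw [Real.rpow_neg_one, div_eq_mul_inv]
  have hvalpos : 0 < A₀ * u ^ (-(1/3) : ℝ) :=
    mul_pos hA₀ (Real.rpow_pos_of_pos hupos _)
  have hAeq : A t = A₀ * u ^ (-(1/3) : ℝ) :=
    cube_inj hAt hvalpos (by rw [hcube, hval])
  have hprod : A₀ * u ^ (-(1/3) : ℝ) * (u ^ ((1/3) : ℝ)) = A₀ := by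
    rw [mul_assoc, ← Real.rpow_add hupos]
    norm_num
  refine ⟨hAeq, ?_, ?_⟩
  · have h := h1 t ht
    rw [hAeq] at h
    have : A₀ * u ^ (-(1/3) : ℝ) * (B₀ * u ^ ((1/3) : ℝ)) = A₀ * B₀ := by
      rw [mul_comm B₀ _, ← mul_assoc, mul_assoc A₀ _ _, ← Real.rpow_add hupos]
      norm_num
    have := h.trans this.symm
    exact mul_left_cancel₀ hvalpos.ne' this
  · have h := h2 t ht
    rw [hAeq] at h
    have : A₀ * u ^ (-(1/3) : ℝ) * (C₀ * u ^ ((1/3) : ℝ)) = A₀ * C₀ := by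
      rw [mul_comm C₀ _, ← mul_assoc, mul_assoc A₀ _ _, ← Real.rpow_add hupos]
      norm_num
    have := h.trans this.symm
    exact mul_left_cancel₀ hvalpos.ne' this
end

section
/- Let A₀, B₀, C₀ > 0 and define, for t ≥ 0, A(t) = A₀(1 + 3A₀t/(B₀C₀))^{−1/3}, B(t) = B₀(1 + 3A₀t/(B₀C₀))^{1/3}, C(t) = C₀(1 + 3A₀t/(B₀C₀))^{1/3}. Then for all t ≥ 0 one has t·A(t)/(B(t)C(t)) ≤ 1/3, and lim_{t→∞} t·A(t)/(B(t)C(t)) = 1/3. In particular the quantity t·A(t)/(B(t)C(t)) is uniformly bounded, so the Nil Ricci flow, whose sectional curvatures are A/(4BC), −3A/(4BC), A/(4BC), is a type-III solution. -/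
open Filter

lemma rpow_helper (x : ℝ) (hx : 0 < x) :
    x ^ (-(1/3) : ℝ) / (x ^ ((1/3) : ℝ) * x ^ ((1/3) : ℝ)) = x⁻¹ := by
  rw [← Real.rpow_add hx, ← Real.rpow_sub hx]
  norm_num
  rw [Real.rpow_neg_one]

lemma g_tendsto : Tendsto (fun u : ℝ => u / (1 + 3 * u)) atTop (nhds (1/3)) := by
  have h : Tendsto (fun u : ℝ => u⁻¹ + 3) atTop (nhds (0 + 3)) :=
    tendsto_inv_atTop_zero.add tendsto_const_nhds
  have h2 : Tendsto (fun u : ℝ => (u⁻¹ + 3)⁻¹) atTop (nhds ((0 + 3):ℝ)⁻¹) :=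
    h.inv₀ (by norm_num)
  have h3 : ((0 + 3):ℝ)⁻¹ = 1/3 := by norm_num
  rw [h3] at h2
  apply h2.congr'
  filter_upwards [eventually_gt_atTop (0:ℝ)] with u hu
  rw [inv_eq_one_div, div_eq_div_iff (by positivity) (by positivity)]
  field_simp

/-- **The Nil Ricci flow is type-III.**
For the explicit Nil Ricci-flow solution `A(t) = A₀(1 + 3A₀t/(B₀C₀))^{−1/3}`,
`B(t) = B₀(1 + 3A₀t/(B₀C₀))^{1/3}`, `C(t) = C₀(1 + 3A₀t/(B₀C₀))^{1/3}`, the quantity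
`t·A(t)/(B(t)C(t))` is at most `1/3` for all `t ≥ 0` and tends to `1/3` as `t → ∞`;
since the sectional curvatures are `A/(4BC)`, `−3A/(4BC)`, `A/(4BC)`, the Nil Ricci
flow is a type-III solution. -/
theorem nil_ricci_flow_typeIII
    (A₀ B₀ C₀ : ℝ) (hA₀ : 0 < A₀) (hB₀ : 0 < B₀) (hC₀ : 0 < C₀)
    (A B C : ℝ → ℝ)
    (hA : ∀ t, A t = A₀ * (1 + 3 * A₀ * t / (B₀ * C₀)) ^ (-(1/3) : ℝ))
    (hB : ∀ t, B t = B₀ * (1 + 3 * A₀ * t / (B₀ * C₀)) ^ ((1/3) : ℝ))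
    (hC : ∀ t, C t = C₀ * (1 + 3 * A₀ * t / (B₀ * C₀)) ^ ((1/3) : ℝ)) :
    (∀ t ≥ (0:ℝ), t * A t / (B t * C t) ≤ 1/3) ∧
    Tendsto (fun t : ℝ => t * A t / (B t * C t)) atTop (nhds (1/3)) := by
  have hBC : 0 < B₀ * C₀ := mul_pos hB₀ hC₀
  have key : ∀ t : ℝ, 0 ≤ t →
      t * A t / (B t * C t) = (A₀ * t / (B₀ * C₀)) / (1 + 3 * (A₀ * t / (B₀ * C₀))) := by
    intro t ht
    have hx : 0 < 1 + 3 * A₀ * t / (B₀ * C₀) := by positivity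
    rw [hA, hB, hC]
    set x := 1 + 3 * A₀ * t / (B₀ * C₀) with hxdef
    have hy : 0 < x ^ ((1/3):ℝ) := Real.rpow_pos_of_pos hx _
    have hy3 : (x ^ ((1/3):ℝ)) ^ (3:ℕ) = x := by
      rw [← Real.rpow_natCast (x ^ ((1/3):ℝ)) 3, ← Real.rpow_mul hx.le]
      norm_num
    have hneg : x ^ (-(1/3) : ℝ) = (x ^ ((1/3):ℝ))⁻¹ := by
      rw [Real.rpow_neg hx.le]
    rw [hneg]
    rw [show (1 : ℝ) + 3 * (A₀ * t / (B₀ * C₀)) = x by rw [hxdef]; ring]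
    clear hxdef hA hB hC
    clear_value x
    set y := x ^ ((1/3):ℝ) with hydef
    clear hydef
    clear_value y
    subst hy3
    field_simp
  constructor
  · intro t ht
    rw [key t ht]
    set u := A₀ * t / (B₀ * C₀) with hu
    have hu0 : 0 ≤ u := by positivity
    rw [div_le_div_iff₀ (by linarith) (by norm_num)]
    linarith
  · have hu : Tendsto (fun t : ℝ => A₀ * t / (B₀ * C₀)) atTop atTop := by
      apply Tendsto.atTop_div_const hBC
      exact (tendsto_const_mul_atTop_of_pos hA₀).mpr tendsto_id
    have := g_tendsto.comp hu
    apply this.congr'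
    filter_upwards [eventually_ge_atTop (0:ℝ)] with t ht
    exact (key t ht).symm
end

section
/- Let A, B, C : [0, ∞) → ℝ be differentiable functions, positive for all t ≥ 0, satisfying the Isom(ℝ²) Ricci-flow system A'(t) = −(A(t)² − B(t)²)/(B(t)C(t)), B'(t) = −(B(t)² − A(t)²)/(A(t)C(t)), C'(t) = (A(t) − B(t))²/(A(t)B(t)) for all t ≥ 0. Then the product A(t)·B(t) is constant: A(t)B(t) = A(0)B(0) for all t ≥ 0. -/
open Set

/-- **Isom(ℝ²) Ricci flow: conservation of A·B.**
If `A, B, C : [0,∞) → ℝ` are differentiable, positive functions satisfying the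
`Isom(ℝ²)` Ricci-flow system `A' = −(A² − B²)/(BC)`, `B' = −(B² − A²)/(AC)`,
`C' = (A − B)²/(AB)`, then `A(t)·B(t) = A(0)·B(0)` for all `t ≥ 0`. -/
theorem isomR2_ricci_flow_AB_const
    (A B C : ℝ → ℝ)
    (hApos : ∀ t ≥ (0:ℝ), 0 < A t)
    (hBpos : ∀ t ≥ (0:ℝ), 0 < B t)
    (hCpos : ∀ t ≥ (0:ℝ), 0 < C t)
    (hA : ∀ t ≥ (0:ℝ),
      HasDerivWithinAt A (-((A t ^ 2 - B t ^ 2) / (B t * C t))) (Ici 0) t)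
    (hB : ∀ t ≥ (0:ℝ),
      HasDerivWithinAt B (-((B t ^ 2 - A t ^ 2) / (A t * C t))) (Ici 0) t)
    (hC : ∀ t ≥ (0:ℝ),
      HasDerivWithinAt C ((A t - B t) ^ 2 / (A t * B t)) (Ici 0) t) :
    ∀ t ≥ (0:ℝ), A t * B t = A 0 * B 0 := by
  have key : ∀ t ∈ Ici (0:ℝ), HasDerivWithinAt (fun t => A t * B t) 0 (Ici 0) t := by
    intro t ht
    have h := (hA t ht).mul (hB t ht)
    have hA0 := (hApos t ht).ne'
    have hB0 := (hBpos t ht).ne'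
    have hC0 := (hCpos t ht).ne'
    have : -((A t ^ 2 - B t ^ 2) / (B t * C t)) * B t
        + A t * -((B t ^ 2 - A t ^ 2) / (A t * C t)) = 0 := by
      field_simp
      ring
    rwa [this] at h
  intro t ht
  exact (convex_Ici (0:ℝ)).is_const_of_fderivWithin_eq_zero
    (fun x hx => (key x hx).differentiableWithinAt)
    (fun x hx => by
      rw [(key x hx).hasFDerivWithinAt.fderivWithin (uniqueDiffOn_Ici 0 x hx)]
      ext; simp)
    ht self_mem_Ici
end

section
/- Let A, B, C : [0, ∞) → ℝ be differentiable functions, positive for all t ≥ 0, satisfying the SL(2,ℝ) Ricci-flow system A'(t) = ((B(t) − C(t))² − A(t)²)/(B(t)C(t)), B'(t) = ((C(t) + A(t))² − B(t)²)/(A(t)C(t)), C'(t) = ((A(t) + B(t))² − C(t)²)/(A(t)B(t)) for all t ≥ 0. Then there exists A* > 0 such that lim_{t→∞} A(t) = A*, and moreover lim_{t→∞} B(t)/t = 2 and lim_{t→∞} C(t)/t = 2. -/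
open Set Filter

lemma auxMonoOn {f f' : ℝ → ℝ} (hf : ∀ t ≥ (0:ℝ), HasDerivWithinAt f (f' t) (Ici 0) t)
    (h0 : ∀ t > (0:ℝ), 0 ≤ f' t) : MonotoneOn f (Ici 0) := by
  refine monotoneOn_of_hasDerivWithinAt_nonneg (f' := f') (convex_Ici 0)
    (fun t ht => (hf t ht).continuousWithinAt) (fun t ht => ?_) (fun t ht => ?_)
  · rw [interior_Ici] at ht ⊢
    exact (hf t ht.le).mono Ioi_subset_Ici_self
  · rw [interior_Ici] at ht
    exact h0 t ht

lemma auxAntiOn {f f' : ℝ → ℝ} (hf : ∀ t ≥ (0:ℝ), HasDerivWithinAt f (f' t) (Ici 0) t)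
    (h0 : ∀ t > (0:ℝ), f' t ≤ 0) : AntitoneOn f (Ici 0) := by
  refine antitoneOn_of_hasDerivWithinAt_nonpos (f' := f') (convex_Ici 0)
    (fun t ht => (hf t ht).continuousWithinAt) (fun t ht => ?_) (fun t ht => ?_)
  · rw [interior_Ici] at ht ⊢
    exact (hf t ht.le).mono Ioi_subset_Ici_self
  · rw [interior_Ici] at ht
    exact h0 t ht

lemma auxTendsto {f : ℝ → ℝ} (hf : AntitoneOn f (Ici 0)) {m : ℝ}
    (hm : ∀ t ≥ (0:ℝ), m ≤ f t) : ∃ L, m ≤ L ∧ Tendsto f atTop (nhds L) := by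
  set g : ℝ → ℝ := fun t => f (max t 0) with hg
  have hganti : Antitone g := fun s t hst =>
    hf (le_max_right s 0) (le_max_right t 0) (max_le_max hst le_rfl)
  have hbdd : BddBelow (range g) := ⟨m, by rintro _ ⟨t, rfl⟩; exact hm _ (le_max_right t 0)⟩
  have htend := tendsto_atTop_ciInf hganti hbdd
  refine ⟨_, le_ciInf fun t => hm _ (le_max_right t 0), htend.congr' ?_⟩
  filter_upwards [eventually_ge_atTop 0] with t ht
  simp [hg, max_eq_left ht]

set_option maxHeartbeats 1600000 in
/-- **SL(2,ℝ) Ricci flow: long-time asymptotics.**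
If `A, B, C : [0,∞) → ℝ` are differentiable, positive functions satisfying the
`SL(2,ℝ)` Ricci-flow system `A' = ((B−C)² − A²)/(BC)`, `B' = ((C+A)² − B²)/(AC)`,
`C' = ((A+B)² − C²)/(AB)`, then `A(t)` converges to some `A* > 0`, and
`B(t)/t → 2`, `C(t)/t → 2` as `t → ∞`. -/
theorem sl2_ricci_flow_asymptotics
    (A B C : ℝ → ℝ)
    (hApos : ∀ t ≥ (0:ℝ), 0 < A t)
    (hBpos : ∀ t ≥ (0:ℝ), 0 < B t)
    (hCpos : ∀ t ≥ (0:ℝ), 0 < C t)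
    (hA : ∀ t ≥ (0:ℝ),
      HasDerivWithinAt A (((B t - C t) ^ 2 - A t ^ 2) / (B t * C t)) (Ici 0) t)
    (hB : ∀ t ≥ (0:ℝ),
      HasDerivWithinAt B (((C t + A t) ^ 2 - B t ^ 2) / (A t * C t)) (Ici 0) t)
    (hC : ∀ t ≥ (0:ℝ),
      HasDerivWithinAt C (((A t + B t) ^ 2 - C t ^ 2) / (A t * B t)) (Ici 0) t) :
    (∃ Astar : ℝ, 0 < Astar ∧ Tendsto A atTop (nhds Astar)) ∧
    Tendsto (fun t => B t / t) atTop (nhds 2) ∧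
    Tendsto (fun t => C t / t) atTop (nhds 2) := by
  have mem0 : (0:ℝ) ∈ Ici (0:ℝ) := mem_Ici.mpr le_rfl
  set W : ℝ → ℝ := fun t => A t * (B t + C t) with hWdef
  set V : ℝ → ℝ := fun t => A t * (B t - C t) with hVdef
  clear_value W V
  have hA0 := hApos 0 le_rfl
  have hB0 := hBpos 0 le_rfl
  have hC0 := hCpos 0 le_rfl
  have hW0pos : 0 < W 0 := by
    simp only [hWdef]; exact mul_pos hA0 (by linarith)
  -- derivative of W
  have hWd : ∀ t ≥ (0:ℝ), HasDerivWithinAt W (4 * A t) (Ici 0) t := by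
    intro t ht
    rw [hWdef]
    have h := (hA t ht).mul ((hB t ht).add (hC t ht))
    refine h.congr_deriv ?_
    have ha := (hApos t ht).ne'
    have hb := (hBpos t ht).ne'
    have hc := (hCpos t ht).ne'
    simp only [Pi.add_apply]
    field_simp
    ring
  -- derivative of V
  have hVd : ∀ t ≥ (0:ℝ), HasDerivWithinAt V (-4 * (B t - C t)) (Ici 0) t := by
    intro t ht
    rw [hVdef]
    have h := (hA t ht).mul ((hB t ht).sub (hC t ht))
    refine h.congr_deriv ?_
    have ha := (hApos t ht).ne'
    have hb := (hBpos t ht).ne'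
    have hc := (hCpos t ht).ne'
    simp only [Pi.sub_apply]
    field_simp
    ring
  -- V^2 is nonincreasing
  have hV2anti : AntitoneOn (fun t => V t ^ 2) (Ici 0) := by
    apply auxAntiOn (f' := fun t => (2 : ℕ) * V t ^ 1 * (-4 * (B t - C t)))
    · intro t ht; exact (hVd t ht).pow 2
    · intro t ht
      have := hApos t ht.le
      simp only [hVdef]
      push_cast
      nlinarith [mul_nonneg this.le (sq_nonneg (B t - C t))]
  have hV2le : ∀ t ≥ (0:ℝ), V t ^ 2 ≤ V 0 ^ 2 := fun t ht => hV2anti mem0 ht ht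
  -- W is nondecreasing
  have hWmono : MonotoneOn W (Ici 0) := by
    apply auxMonoOn (f' := fun t => 4 * A t) hWd
    intro t ht
    have := hApos t ht.le
    linarith
  have hW0le : ∀ t ≥ (0:ℝ), W 0 ≤ W t := fun t ht => hWmono mem0 ht ht
  have hWpos : ∀ t ≥ (0:ℝ), 0 < W t := fun t ht => lt_of_lt_of_le hW0pos (hW0le t ht)
  -- the constant k
  set k : ℝ := 1 - V 0 ^ 2 / W 0 ^ 2 with hkdef
  clear_value k
  have hkpos : 0 < k := by
    have h1 : V 0 ^ 2 < W 0 ^ 2 := by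
      simp only [hVdef, hWdef]
      nlinarith [mul_pos (mul_pos (mul_pos hA0 hA0) hB0) hC0]
    have h2 : V 0 ^ 2 / W 0 ^ 2 < 1 := by
      rw [div_lt_one (by positivity)]
      exact h1
    simp only [hkdef]; linarith
  have hkle1 : k ≤ 1 := by
    simp only [hkdef]
    have : 0 ≤ V 0 ^ 2 / W 0 ^ 2 := by positivity
    linarith
  -- the key inequality k W^2 ≤ W^2 - V^2 = 4 A^2 B C
  have hWV : ∀ t ≥ (0:ℝ), W t ^ 2 - V t ^ 2 = 4 * A t ^ 2 * B t * C t := by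
    intro t ht; simp only [hWdef, hVdef]; ring
  have hkW : ∀ t ≥ (0:ℝ), k * W t ^ 2 ≤ W t ^ 2 - V t ^ 2 := by
    intro t ht
    have h1 : W 0 ≤ W t := hW0le t ht
    have h2 : V t ^ 2 ≤ V 0 ^ 2 := hV2le t ht
    have h3 : V 0 ^ 2 / W 0 ^ 2 * W 0 ^ 2 = V 0 ^ 2 := by
      field_simp
    have h4 : 0 ≤ V 0 ^ 2 / W 0 ^ 2 := by positivity
    have h5 : W 0 ^ 2 ≤ W t ^ 2 := by nlinarith [hW0pos]
    simp only [hkdef]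
    nlinarith [mul_le_mul_of_nonneg_left h5 h4]

  -- Phi := 1/A^2 + (2/k)/W is nonincreasing
  set Phi : ℝ → ℝ := fun t => (A t ^ 2)⁻¹ + (2/k) * (W t)⁻¹ with hPhidef
  clear_value Phi
  have hPhid : ∀ t ≥ (0:ℝ), HasDerivWithinAt Phi
      (2*(A t^2 - (B t - C t)^2)/(A t^3*(B t*C t)) - (8/k)*(A t/W t^2)) (Ici 0) t := by
    intro t ht
    rw [hPhidef]
    have ha := hApos t ht
    have hb := hBpos t ht
    have hc := hCpos t ht
    have hw := hWpos t ht
    have h := (((hA t ht).pow 2).inv (pow_pos ha 2).ne').add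
      (((hWd t ht).inv hw.ne').const_mul (2/k))
    refine h.congr_deriv ?_
    have hk' := hkpos.ne'
    simp only [Pi.pow_apply]
    field_simp
    ring
  have hPhianti : AntitoneOn Phi (Ici 0) := by
    apply auxAntiOn hPhid
    intro t ht
    have ha := hApos t ht.le
    have hb := hBpos t ht.le
    have hc := hCpos t ht.le
    have hw := hWpos t ht.le
    have e1 : k * W t ^ 2 ≤ 4 * A t ^ 2 * B t * C t := by
      rw [← hWV t ht.le]; exact hkW t ht.le
    have hR : (8/k)*(A t/W t^2) = (8*A t)/(k*W t^2) := by
      field_simp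
    rw [sub_nonpos, hR, div_le_div_iff₀ (by positivity) (by positivity)]
    nlinarith [mul_nonneg (sq_nonneg (A t)) (sub_nonneg.mpr e1),
      mul_nonneg (sq_nonneg (B t - C t)) (by positivity : (0:ℝ) ≤ k * W t ^ 2)]
  have hPhi0pos : 0 < Phi 0 := by
    have : (0:ℝ) < (A 0 ^ 2)⁻¹ := by positivity
    have h2 : (0:ℝ) ≤ (2/k) * (W 0)⁻¹ := by positivity
    simp only [hPhidef]; linarith
  set m : ℝ := Real.sqrt (Phi 0)⁻¹ with hmdef
  clear_value m
  have hm0 : 0 < m := by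
    rw [hmdef]
    exact Real.sqrt_pos.mpr (by positivity)
  have hmA : ∀ t ≥ (0:ℝ), m ≤ A t := by
    intro t ht
    have ha := hApos t ht
    have h1 : (A t ^ 2)⁻¹ ≤ Phi 0 := by
      refine le_trans ?_ (hPhianti mem0 ht ht)
      simp only [hPhidef]
      have hw := hWpos t ht
      have : (0:ℝ) ≤ (2/k) * (W t)⁻¹ := by positivity
      linarith
    have h2 : (Phi 0)⁻¹ ≤ A t ^ 2 := by
      rw [← inv_inv (A t ^ 2)]
      exact inv_anti₀ (by positivity) h1
    calc m = Real.sqrt (Phi 0)⁻¹ := hmdef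
    _ ≤ Real.sqrt (A t ^ 2) := Real.sqrt_le_sqrt h2
    _ = A t := by rw [Real.sqrt_sq ha.le]
  -- W grows at least linearly
  have hWlin : ∀ t ≥ (0:ℝ), W 0 + 4*m*t ≤ W t := by
    have hmono2 : MonotoneOn (fun t => W t - (W 0 + 4*m*t)) (Ici 0) := by
      apply auxMonoOn (f' := fun t => 4 * A t - 4*m)
      · intro t ht
        have hlin0 : HasDerivAt (fun x : ℝ => W 0 + 4*m*x) (4*m) t := by
          simpa using ((hasDerivAt_id t).const_mul (4*m)).const_add (W 0)
        exact (hWd t ht).sub hlin0.hasDerivWithinAt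
      · intro t ht
        have := hmA t ht.le
        linarith
    intro t ht
    have := hmono2 mem0 ht ht
    simp only [mul_zero, add_zero] at this
    linarith
  have hlinpos : ∀ t ≥ (0:ℝ), 0 < W 0 + 4*m*t := by
    intro t ht
    have : 0 ≤ 4*m*t := by positivity
    linarith
  -- Psi := A + (V0^2/(k m)) / (W0 + 4 m t) is nonincreasing
  set Psi : ℝ → ℝ := fun t => A t + (V 0^2/(k*m)) * (W 0 + 4*m*t)⁻¹ with hPsidef
  clear_value Psi
  have hPsid : ∀ t ≥ (0:ℝ), HasDerivWithinAt Psi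
      (((B t - C t) ^ 2 - A t ^ 2) / (B t * C t)
        + (V 0^2/(k*m)) * (-(4*m)/(W 0 + 4*m*t)^2)) (Ici 0) t := by
    intro t ht
    rw [hPsidef]
    have hlin0 : HasDerivAt (fun x : ℝ => W 0 + 4*m*x) (4*m) t := by
      simpa using ((hasDerivAt_id t).const_mul (4*m)).const_add (W 0)
    exact (hA t ht).add
      (((hlin0.hasDerivWithinAt (s := Ici 0)).inv (hlinpos t ht).ne').const_mul _)
  have hPsianti : AntitoneOn Psi (Ici 0) := by
    apply auxAntiOn hPsid
    intro t ht
    have ha := hApos t ht.le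
    have hb := hBpos t ht.le
    have hc := hCpos t ht.le
    have hw := hWpos t ht.le
    have hl := hlinpos t ht.le
    set p : ℝ := W 0 + 4*m*t with hpdef
    clear_value p
    have e1 : k * p ^ 2 ≤ 4 * A t ^ 2 * B t * C t := by
      have h1 : k * p ^ 2 ≤ k * W t ^ 2 := by
        have h0 := hWlin t ht.le
        rw [← hpdef] at h0
        have h2 : p^2 ≤ W t ^2 := by nlinarith
        exact mul_le_mul_of_nonneg_left h2 hkpos.le
      refine le_trans h1 ?_
      rw [← hWV t ht.le]; exact hkW t ht.le
    have e2 : A t ^2 * (B t - C t)^2 ≤ V 0 ^ 2 := by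
      have h := hV2le t ht.le
      have h3 : V t ^ 2 = A t ^2 * (B t - C t)^2 := by
        simp only [hVdef]; ring
      linarith [h3 ▸ h]
    have hR : (V 0^2/(k*m)) * (-(4*m)/p^2)
        = -((4*V 0^2)/(k*p^2)) := by
      have hk0 := hkpos.ne'
      have hm0' := hm0.ne'
      field_simp
    rw [hR, add_neg_le_iff_le_add, zero_add,
      div_le_div_iff₀ (by positivity) (by positivity)]
    nlinarith [mul_nonneg (mul_pos hb hc).le (sub_nonneg.mpr e2),
      mul_nonneg (sq_nonneg (B t - C t)) (sub_nonneg.mpr e1),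
      mul_nonneg (sq_nonneg (A t)) (by positivity : (0:ℝ) ≤ k * p^2)]
  have hPsige : ∀ t ≥ (0:ℝ), m ≤ Psi t := by
    intro t ht
    refine le_trans (hmA t ht) ?_
    simp only [hPsidef]
    have : (0:ℝ) ≤ (V 0^2/(k*m)) * (W 0 + 4*m*t)⁻¹ := by
      have := hlinpos t ht
      positivity
    linarith
  obtain ⟨L, hmL, hPsitend⟩ := auxTendsto hPsianti hPsige
  have hlin_tendsto : Tendsto (fun t : ℝ => W 0 + 4*m*t) atTop atTop := by
    apply tendsto_atTop_add_const_left
    exact Tendsto.const_mul_atTop (by positivity) tendsto_id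
  have hz : Tendsto (fun t : ℝ => (V 0^2/(k*m)) * (W 0 + 4*m*t)⁻¹) atTop (nhds 0) := by
    have h := hlin_tendsto.inv_tendsto_atTop
    have := h.const_mul (V 0^2/(k*m))
    simpa using this
  have hAtend : Tendsto A atTop (nhds L) := by
    have h := hPsitend.sub hz
    rw [sub_zero] at h
    apply h.congr
    intro t
    simp only [hPsidef]
    ring
  refine ⟨⟨L, lt_of_lt_of_le hm0 hmL, hAtend⟩, ?_⟩

  -- upper bound M for A
  have hAub : ∀ t ≥ (0:ℝ), A t ≤ Psi 0 := by
    intro t ht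
    refine le_trans ?_ (hPsianti mem0 ht ht)
    simp only [hPsidef]
    have hl := hlinpos t ht
    have : (0:ℝ) ≤ (V 0^2/(k*m)) * (W 0 + 4*m*t)⁻¹ := by positivity
    linarith
  set M : ℝ := Psi 0 with hMdef
  clear_value M
  have hMpos : 0 < M := lt_of_lt_of_le hA0 (by simpa using hAub 0 le_rfl)
  set c3 : ℝ := 4*(M^2 + V 0^2/m^2)/k with hc3def
  clear_value c3
  have hc3pos : 0 < c3 := by
    rw [hc3def]
    positivity
  set q : ℝ := c3/(4*m) with hqdef
  clear_value q
  have hqpos : 0 < q := by rw [hqdef]; positivity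
  -- derivative of the log comparison term
  have hlogd : ∀ t ≥ (0:ℝ), HasDerivWithinAt (fun t => Real.log (W 0 + 4*m*t))
      (4*m/(W 0 + 4*m*t)) (Ici 0) t := by
    intro t ht
    have hlin0 : HasDerivAt (fun x : ℝ => W 0 + 4*m*x) (4*m) t := by
      simpa using ((hasDerivAt_id t).const_mul (4*m)).const_add (W 0)
    have h := (Real.hasDerivAt_log (hlinpos t ht).ne').comp t hlin0
    have h2 := h.hasDerivWithinAt (s := Ici 0)
    refine h2.congr_deriv ?_
    ring
  -- pointwise bounds on the derivative of B + C
  have hSid : ∀ t ≥ (0:ℝ),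
      ((C t + A t) ^ 2 - B t ^ 2) / (A t * C t) + ((A t + B t) ^ 2 - C t ^ 2) / (A t * B t) - 4
      = (B t + C t) * (A t^2 - (B t - C t)^2) / (A t * (B t * C t)) := by
    intro t ht
    have ha := (hApos t ht).ne'
    have hb := (hBpos t ht).ne'
    have hc := (hCpos t ht).ne'
    field_simp
    ring
  have hfacts : ∀ t ≥ (0:ℝ),
      (A t^2 ≤ M^2 ∧ (B t - C t)^2 ≤ V 0^2/m^2) ∧
      k*(A t*(B t + C t)*(W 0 + 4*m*t)) ≤ 4*A t^2*(B t*C t) := by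
    intro t ht
    have ha := hApos t ht
    have hb := hBpos t ht
    have hc := hCpos t ht
    have hl := hlinpos t ht
    have hma := hmA t ht
    have haM := hAub t ht
    have e2 : A t ^2 * (B t - C t)^2 ≤ V 0 ^ 2 := by
      have h := hV2le t ht
      have h3 : V t ^ 2 = A t ^2 * (B t - C t)^2 := by
        simp only [hVdef]; ring
      linarith [h3 ▸ h]
    refine ⟨⟨by nlinarith, ?_⟩, ?_⟩
    · rw [le_div_iff₀ (by positivity)]
      have h5 : m^2 ≤ A t^2 := by nlinarith
      nlinarith [mul_le_mul_of_nonneg_right h5 (sq_nonneg (B t - C t))]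
    · have hWeq : W t = A t * (B t + C t) := by rw [hWdef]
      have hWp : W 0 + 4*m*t ≤ W t := hWlin t ht
      have hkW2 : k * W t ^ 2 ≤ 4 * A t ^ 2 * B t * C t := by
        rw [← hWV t ht]; exact hkW t ht
      rw [hWeq] at hWp hkW2
      have hsp : (0:ℝ) < A t * (B t + C t) := by positivity
      nlinarith [mul_le_mul_of_nonneg_left hWp (mul_nonneg hkpos.le hsp.le)]
  have hc3k : c3*k = 4*(M^2 + V 0^2/m^2) := by
    have hk' := hkpos.ne'
    have hm' := hm0.ne'
    rw [hc3def]
    field_simp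
  -- the two barrier functions
  have hup : AntitoneOn (fun t => B t + C t - 4*t - q*Real.log (W 0 + 4*m*t)) (Ici 0) := by
    apply auxAntiOn (f' := fun t =>
      (((C t + A t) ^ 2 - B t ^ 2) / (A t * C t) + ((A t + B t) ^ 2 - C t ^ 2) / (A t * B t))
        - 4 - q*(4*m/(W 0 + 4*m*t)))
    · intro t ht
      have h4 : HasDerivAt (fun x : ℝ => 4*x) 4 t := by
        simpa using (hasDerivAt_id t).const_mul (4:ℝ)
      exact (((hB t ht).add (hC t ht)).sub h4.hasDerivWithinAt).sub
        ((hlogd t ht).const_mul q)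
    · intro t ht
      have ha := hApos t ht.le
      have hb := hBpos t ht.le
      have hc := hCpos t ht.le
      have hl := hlinpos t ht.le
      have hqm : q*(4*m/(W 0 + 4*m*t)) = c3/(W 0 + 4*m*t) := by
        rw [hqdef]; field_simp
      obtain ⟨⟨f1, f2⟩, f3⟩ := hfacts t ht.le
      have hQ0 : (0:ℝ) ≤ M^2 + V 0^2/m^2 := by positivity
      have hkasp : (0:ℝ) ≤ k*(A t*(B t + C t)*(W 0 + 4*m*t)) := by positivity
      have hX : A t^2 - (B t - C t)^2 ≤ M^2 + V 0^2/m^2 := by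
        have : (0:ℝ) ≤ V 0^2/m^2 := by positivity
        nlinarith [sq_nonneg (B t - C t)]
      have g1 := mul_le_mul_of_nonneg_right hX hkasp
      have g2 := mul_le_mul_of_nonneg_left f3 hQ0
      have hbound : ((C t + A t) ^ 2 - B t ^ 2) / (A t * C t)
          + ((A t + B t) ^ 2 - C t ^ 2) / (A t * B t) - 4 ≤ c3/(W 0 + 4*m*t) := by
        rw [hSid t ht.le, div_le_div_iff₀ (by positivity) hl, hc3def,
          div_mul_eq_mul_div, le_div_iff₀ hkpos]
        nlinarith [g1, g2, ha, mul_pos hb hc]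
      rw [hqm]
      linarith
  have hlo : MonotoneOn (fun t => B t + C t - 4*t + q*Real.log (W 0 + 4*m*t)) (Ici 0) := by
    apply auxMonoOn (f' := fun t =>
      (((C t + A t) ^ 2 - B t ^ 2) / (A t * C t) + ((A t + B t) ^ 2 - C t ^ 2) / (A t * B t))
        - 4 + q*(4*m/(W 0 + 4*m*t)))
    · intro t ht
      have h4 : HasDerivAt (fun x : ℝ => 4*x) 4 t := by
        simpa using (hasDerivAt_id t).const_mul (4:ℝ)
      exact (((hB t ht).add (hC t ht)).sub h4.hasDerivWithinAt).add
        ((hlogd t ht).const_mul q)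
    · intro t ht
      have ha := hApos t ht.le
      have hb := hBpos t ht.le
      have hc := hCpos t ht.le
      have hl := hlinpos t ht.le
      have hqm : q*(4*m/(W 0 + 4*m*t)) = c3/(W 0 + 4*m*t) := by
        rw [hqdef]; field_simp
      obtain ⟨⟨f1, f2⟩, f3⟩ := hfacts t ht.le
      have hQ0 : (0:ℝ) ≤ M^2 + V 0^2/m^2 := by positivity
      have hkasp : (0:ℝ) ≤ k*(A t*(B t + C t)*(W 0 + 4*m*t)) := by positivity
      have hX : -(A t^2 - (B t - C t)^2) ≤ M^2 + V 0^2/m^2 := by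
        nlinarith [sq_nonneg (A t), sq_nonneg M]
      have g1 := mul_le_mul_of_nonneg_right hX hkasp
      have g2 := mul_le_mul_of_nonneg_left f3 hQ0
      have hbound : -(c3/(W 0 + 4*m*t)) ≤ ((C t + A t) ^ 2 - B t ^ 2) / (A t * C t)
          + ((A t + B t) ^ 2 - C t ^ 2) / (A t * B t) - 4 := by
        rw [hSid t ht.le, neg_le, ← neg_div, div_le_div_iff₀ (by positivity) hl,
          hc3def, div_mul_eq_mul_div, le_div_iff₀ hkpos]
        nlinarith [g1, g2, ha, mul_pos hb hc]
      rw [hqm]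
      linarith
  -- integrated bounds
  have hSup : ∀ t ≥ (0:ℝ), B t + C t ≤ 4*t + q*Real.log (W 0 + 4*m*t)
      + (B 0 + C 0 - q*Real.log (W 0)) := by
    intro t ht
    have h := hup mem0 ht ht
    simp only [mul_zero, add_zero, sub_zero] at h
    linarith
  have hSlo : ∀ t ≥ (0:ℝ), 4*t - q*Real.log (W 0 + 4*m*t)
      + (B 0 + C 0 + q*Real.log (W 0)) ≤ B t + C t := by
    intro t ht
    have h := hlo mem0 ht ht
    simp only [mul_zero, add_zero, sub_zero] at h
    linarith
  -- log grows sublinearly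
  have hlog0 : Tendsto (fun t => Real.log (W 0 + 4*m*t)/t) atTop (nhds 0) := by
    have h1 : (fun t : ℝ => Real.log (W 0 + 4*m*t)) =o[atTop] (fun t => W 0 + 4*m*t) :=
      Real.isLittleO_log_id_atTop.comp_tendsto hlin_tendsto
    have h2 : (fun t : ℝ => W 0 + 4*m*t) =O[atTop] (fun t => t) := by
      apply Asymptotics.IsBigO.of_bound (W 0 + 4*m)
      filter_upwards [eventually_ge_atTop 1] with t ht1
      have htpos : (0:ℝ) < t := by linarith
      rw [Real.norm_eq_abs, Real.norm_eq_abs, abs_of_pos (hlinpos t htpos.le),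
        abs_of_pos htpos]
      nlinarith [hW0pos, hm0]
    exact (h1.trans_isBigO h2).tendsto_div_nhds_zero
  have hconst0 : ∀ K : ℝ, Tendsto (fun t : ℝ => K/t) atTop (nhds 0) := by
    intro K
    exact Tendsto.div_atTop tendsto_const_nhds tendsto_id
  -- S/t tends to 4
  have hS4 : Tendsto (fun t => (B t + C t)/t) atTop (nhds 4) := by
    have hg1 : Tendsto (fun t => 4 + (B 0 + C 0 + q*Real.log (W 0))/t
        - q*(Real.log (W 0 + 4*m*t)/t)) atTop (nhds 4) := by
      have := (tendsto_const_nhds (x := (4:ℝ)) (f := atTop)).add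
        (hconst0 (B 0 + C 0 + q*Real.log (W 0))) |>.sub (hlog0.const_mul q)
      simpa using this
    have hg2 : Tendsto (fun t => 4 + (B 0 + C 0 - q*Real.log (W 0))/t
        + q*(Real.log (W 0 + 4*m*t)/t)) atTop (nhds 4) := by
      have := (tendsto_const_nhds (x := (4:ℝ)) (f := atTop)).add
        (hconst0 (B 0 + C 0 - q*Real.log (W 0))) |>.add (hlog0.const_mul q)
      simpa using this
    refine tendsto_of_tendsto_of_tendsto_of_le_of_le' hg1 hg2 ?_ ?_
    · filter_upwards [eventually_ge_atTop 1] with t ht1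
      have htpos : (0:ℝ) < t := by linarith
      rw [le_div_iff₀ htpos]
      have h := hSlo t (by linarith)
      have hexp : (4 + (B 0 + C 0 + q*Real.log (W 0))/t
          - q*(Real.log (W 0 + 4*m*t)/t)) * t
          = 4*t - q*Real.log (W 0 + 4*m*t) + (B 0 + C 0 + q*Real.log (W 0)) := by
        field_simp
        ring
      rw [hexp]
      linarith
    · filter_upwards [eventually_ge_atTop 1] with t ht1
      have htpos : (0:ℝ) < t := by linarith
      rw [div_le_iff₀ htpos]
      have h := hSup t (by linarith)
      have hexp : (4 + (B 0 + C 0 - q*Real.log (W 0))/t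
          + q*(Real.log (W 0 + 4*m*t)/t)) * t
          = 4*t + q*Real.log (W 0 + 4*m*t) + (B 0 + C 0 - q*Real.log (W 0)) := by
        field_simp
        ring
      rw [hexp]
      linarith
  -- B - C is bounded
  have hDb : ∀ t ≥ (0:ℝ), |B t - C t| ≤ |V 0|/m := by
    intro t ht
    obtain ⟨⟨_, f2⟩, _⟩ := hfacts t ht
    have h1 : Real.sqrt ((B t - C t)^2) ≤ Real.sqrt (V 0^2/m^2) := Real.sqrt_le_sqrt f2
    rw [Real.sqrt_sq_eq_abs] at h1
    refine le_trans h1 (le_of_eq ?_)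
    rw [Real.sqrt_div (sq_nonneg (V 0)), Real.sqrt_sq_eq_abs, Real.sqrt_sq hm0.le]
  -- (B-C)/t tends to 0
  have hD0 : Tendsto (fun t => (B t - C t)/t) atTop (nhds 0) := by
    refine tendsto_of_tendsto_of_tendsto_of_le_of_le' (hconst0 (-(|V 0|/m))) (hconst0 (|V 0|/m))
      ?_ ?_
    · filter_upwards [eventually_ge_atTop 1] with t ht1
      have htpos : (0:ℝ) < t := by linarith
      have h := (abs_le.mp (hDb t (by linarith))).1
      exact (div_le_div_iff_of_pos_right htpos).mpr h
    · filter_upwards [eventually_ge_atTop 1] with t ht1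
      have htpos : (0:ℝ) < t := by linarith
      have h := (abs_le.mp (hDb t (by linarith))).2
      exact (div_le_div_iff_of_pos_right htpos).mpr h
  -- conclude
  constructor
  · have heq : ∀ᶠ t in atTop, ((B t + C t)/t + (B t - C t)/t)/2 = B t / t := by
      filter_upwards [eventually_ge_atTop 1] with t ht1
      have htne : t ≠ 0 := by intro h; rw [h] at ht1; linarith
      field_simp
      ring
    have := ((hS4.add hD0).div_const 2).congr' heq
    norm_num at this
    exact this
  · have heq : ∀ᶠ t in atTop, ((B t + C t)/t - (B t - C t)/t)/2 = C t / t := by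
      filter_upwards [eventually_ge_atTop 1] with t ht1
      have htne : t ≠ 0 := by intro h; rw [h] at ht1; linarith
      field_simp
      ring
    have := ((hS4.sub hD0).div_const 2).congr' heq
    norm_num at this
    exact this
end
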